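/- Let T : ℝ₊^N → ℝ₊₊^N be a continuous standard interference mapping with asymptotic mapping T_∞ (componentwise asymptotic functions). Let p̄ₙ → ∞, let (pₙ, λₙ) solve T(pₙ) = λₙpₙ, ‖pₙ‖_a = p̄ₙ, set xₙ := pₙ/‖pₙ‖_a, and suppose λₙ → λ_∞. Then every accumulation point x_∞ of (xₙ) satisfies T_∞(x_∞) = λ_∞·x_∞ and ‖x_∞‖_a = 1. -/

import Mathlib

/-!
Along the subsequence, `p n = h n • x n` with `h n = na (p n) → ∞`, so the eigen-equation reads
`T (h n • x n) i / h n = lam n * x n i`. Monotonicity, sub-homogeneity and continuity of `T` make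
the left side converge to `Tinf x∞ i` even though the direction `x n` moves with `n`.
-/

open Filter Topology

section AsymptoticFunction

variable {ι : Type*} {f : (ι → ℝ) → ℝ}

lemma apply_smul_div_le_of_le
    (hscale : ∀ x : ι → ℝ, 0 ≤ x → ∀ α : ℝ, 1 < α → f (α • x) < α * f x)
    {x : ι → ℝ} (hx : 0 ≤ x) {a b : ℝ} (ha : 0 < a) (hab : a ≤ b) :
    f (b • x) / b ≤ f (a • x) / a := by
  rcases hab.eq_or_lt with rfl | hlt
  · rfl
  have hb : 0 < b := ha.trans hlt
  have h := hscale (a • x) (smul_nonneg ha.le hx) (b / a) ((one_lt_div ha).2 hlt)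
  rw [smul_smul, div_mul_cancel₀ _ ha.ne'] at h
  rw [div_le_div_iff₀ hb ha]
  calc f (b • x) * a ≤ b / a * f (a • x) * a := by gcongr
    _ = f (a • x) * b := by field_simp

lemma eventually_smul_le_of_tendsto {α : Type*} [Finite ι] {l : Filter α}
    {xs : α → ι → ℝ} {x : ι → ℝ} (hxs : ∀ n, 0 ≤ xs n) (hx : 0 ≤ x)
    (hlim : Tendsto xs l (𝓝 x)) {c : ℝ} (hc : c < 1) :
    ∀ᶠ n in l, c • x ≤ xs n := by
  refine eventually_all.2 fun i => ?_
  rcases (hx i).eq_or_lt with hxi | hxi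
  · exact Eventually.of_forall fun n => by simpa [← hxi] using hxs n i
  · have : c * x i < x i := mul_lt_of_lt_one_left hxi hc
    exact ((tendsto_pi_nhds.1 hlim i).eventually_const_lt this).mono fun n hn => hn.le

theorem tendsto_apply_smul_div_of_tendsto [Finite ι] {α : Type*} {l : Filter α}
    (hmono : ∀ x y : ι → ℝ, 0 ≤ y → y ≤ x → f y ≤ f x)
    (hscale : ∀ x : ι → ℝ, 0 ≤ x → ∀ α : ℝ, 1 < α → f (α • x) < α * f x)
    (hcont : ContinuousOn f {y | 0 ≤ y})
    {x : ι → ℝ} (hx : 0 ≤ x) {L : ℝ}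
    (hL : Tendsto (fun h : ℝ => f (h • x) / h) atTop (𝓝 L))
    {xs : α → ι → ℝ} (hxs : ∀ n, 0 ≤ xs n) (hlim : Tendsto xs l (𝓝 x))
    {hs : α → ℝ} (hhs : Tendsto hs l atTop) :
    Tendsto (fun n => f (hs n • xs n) / hs n) l (𝓝 L) := by
  refine tendsto_order.2 ⟨fun a ha => ?_, fun a ha => ?_⟩
  · -- eventually `c • x ≤ xs n`: by monotonicity, compare with the ray through `x` at `c * hs n`
    obtain ⟨c, hac, hc0, hc1⟩ : ∃ c : ℝ, a < c * L ∧ 0 < c ∧ c < 1 := by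
      have : Tendsto (fun c : ℝ => c * L) (𝓝[<] 1) (𝓝 L) :=
        ((continuous_mul_const L).tendsto' 1 L (one_mul L)).mono_left nhdsWithin_le_nhds
      obtain ⟨c, hc, hc'⟩ :=
        ((this.eventually (lt_mem_nhds ha)).and (Ioo_mem_nhdsLT zero_lt_one)).exists
      exact ⟨c, hc, hc'.1, hc'.2⟩
    have hray : Tendsto (fun n => c * (f ((c * hs n) • x) / (c * hs n))) l (𝓝 (c * L)) :=
      (hL.comp (hhs.const_mul_atTop hc0)).const_mul c
    filter_upwards [hray.eventually_const_lt hac, hhs.eventually_gt_atTop 0,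
      eventually_smul_le_of_tendsto hxs hx hlim hc1] with n hn hpos hle
    calc a < c * (f ((c * hs n) • x) / (c * hs n)) := hn
      _ = f (hs n • c • x) / hs n := by rw [smul_smul, mul_comm]; field_simp
      _ ≤ f (hs n • xs n) / hs n := by
        gcongr
        exact hmono _ _ (smul_nonneg hpos.le (smul_nonneg hc0.le hx))
          (smul_le_smul_of_nonneg_left hle hpos.le)
  · -- `h ↦ f (h • y) / h` is antitone, so freeze it at some `h₀` and use continuity in `y`
    obtain ⟨h₀, hh₀, hpos⟩ :=
      ((hL.eventually (gt_mem_nhds ha)).and (eventually_gt_atTop 0)).exists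
    have hfrozen : Tendsto (fun n => f (h₀ • xs n) / h₀) l (𝓝 (f (h₀ • x) / h₀)) := by
      refine ((hcont _ (smul_nonneg hpos.le hx)).tendsto.comp ?_).div_const h₀
      exact tendsto_nhdsWithin_iff.2
        ⟨hlim.const_smul h₀, Eventually.of_forall fun n => smul_nonneg hpos.le (hxs n)⟩
    filter_upwards [hfrozen.eventually_lt_const hh₀, hhs.eventually_ge_atTop h₀] with n hn hle
    exact (apply_smul_div_le_of_le hscale (hxs n) hpos hle).trans_lt hn

end AsymptoticFunction

theorem stmt12_general {N : ℕ} (T Tinf : (Fin N → ℝ) → (Fin N → ℝ))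
    (na : (Fin N → ℝ) → ℝ)
    (hTmono : ∀ x y : Fin N → ℝ, 0 ≤ y → y ≤ x → T y ≤ T x)
    (hTscale : ∀ x : Fin N → ℝ, 0 ≤ x → ∀ α : ℝ, 1 < α → ∀ i, T (α • x) i < α * T x i)
    (hTcont : ContinuousOn T {y : Fin N → ℝ | 0 ≤ y})
    (hTinf : ∀ x : Fin N → ℝ, 0 ≤ x →
      ∀ i, Tendsto (fun h : ℝ => T (h • x) i / h) atTop (𝓝 (Tinf x i)))
    (hna_homog : ∀ (c : ℝ) (x : Fin N → ℝ), 0 ≤ c → na (c • x) = c * na x)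
    (hna_cont : Continuous na)
    (pbar : ℕ → ℝ) (p : ℕ → Fin N → ℝ) (lam : ℕ → ℝ) (lamInf : ℝ)
    (hpbar_pos : ∀ n, 0 < pbar n)
    (hpbar : Tendsto pbar atTop atTop)
    (hsol : ∀ n, (∀ i, 0 < p n i) ∧ 0 < lam n ∧
      T (p n) = lam n • p n ∧ na (p n) = pbar n)
    (hlam : Tendsto lam atTop (𝓝 lamInf))
    (xInf : Fin N → ℝ)
    (hacc : ∃ φ : ℕ → ℕ, StrictMono φ ∧
      Tendsto (fun n => (na (p (φ n)))⁻¹ • p (φ n)) atTop (𝓝 xInf)) :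
    Tinf xInf = lamInf • xInf ∧ na xInf = 1 := by
  obtain ⟨φ, hφ, hxφ⟩ := hacc
  have hna_pos : ∀ n, 0 < na (p n) := fun n => (hsol n).2.2.2 ▸ hpbar_pos n
  set xs := fun n => (na (p (φ n)))⁻¹ • p (φ n)
  have hxs_nonneg : ∀ n, 0 ≤ xs n := fun n =>
    smul_nonneg (inv_nonneg.2 (hna_pos _).le) fun i => ((hsol _).1 i).le
  have hx_nonneg : 0 ≤ xInf := ge_of_tendsto' hxφ hxs_nonneg
  have hna_tendsto : Tendsto (fun n => na (p (φ n))) atTop atTop :=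
    (hpbar.comp hφ.tendsto_atTop).congr fun n => ((hsol (φ n)).2.2.2).symm
  refine ⟨funext fun i => tendsto_nhds_unique ?_
    ((hlam.comp hφ.tendsto_atTop).mul (tendsto_pi_nhds.1 hxφ i)), ?_⟩
  · refine (tendsto_apply_smul_div_of_tendsto (fun x y hy hxy => hTmono x y hy hxy i)
      (fun x hx α hα => hTscale x hx α hα i) ((continuous_apply i).comp_continuousOn hTcont)
      hx_nonneg (hTinf xInf hx_nonneg i) hxs_nonneg hxφ hna_tendsto).congr fun n => ?_
    simp only [xs, smul_inv_smul₀ (hna_pos _).ne', (hsol _).2.2.1, Function.comp_apply,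
      Pi.smul_apply, smul_eq_mul]
    field_simp
  · have hxs_norm : ∀ n, na (xs n) = 1 := fun n => by
      rw [hna_homog _ _ (inv_nonneg.2 (hna_pos _).le), inv_mul_cancel₀ (hna_pos _).ne']
    exact tendsto_nhds_unique ((hna_cont.tendsto xInf).comp hxφ)
      (by simp only [Function.comp_def, hxs_norm, tendsto_const_nhds])

/-- Let `T` be a continuous standard interference mapping with asymptotic
mapping `Tinf` (componentwise asymptotic functions). Let `pbar n → ∞`, let `(p n, lam n)`
solve `T (p n) = lam n • p n`, `na (p n) = pbar n`, set `x n := (na (p n))⁻¹ • p n`, and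
suppose `lam n → lamInf`. Then every accumulation point `xInf` of `(x n)` satisfies
`Tinf xInf = lamInf • xInf` and `na xInf = 1`. -/
theorem stmt12 {N : ℕ} (T Tinf : (Fin N → ℝ) → (Fin N → ℝ))
    (na : (Fin N → ℝ) → ℝ)
    (hTpos : ∀ x : Fin N → ℝ, 0 ≤ x → ∀ i, 0 < T x i)
    (hTmono : ∀ x y : Fin N → ℝ, 0 ≤ y → y ≤ x → T y ≤ T x)
    (hTscale : ∀ x : Fin N → ℝ, 0 ≤ x → ∀ α : ℝ, 1 < α → ∀ i, T (α • x) i < α * T x i)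
    (hTcont : ContinuousOn T {y : Fin N → ℝ | 0 ≤ y})
    (hTinf : ∀ x : Fin N → ℝ, 0 ≤ x →
      ∀ i, Tendsto (fun h : ℝ => T (h • x) i / h) atTop (𝓝 (Tinf x i)))
    (hna_mono : ∀ x y : Fin N → ℝ, 0 ≤ x → x ≤ y → na x ≤ na y)
    (hna_homog : ∀ (c : ℝ) (x : Fin N → ℝ), 0 ≤ c → na (c • x) = c * na x)
    (hna_cont : Continuous na)
    (pbar : ℕ → ℝ) (p : ℕ → Fin N → ℝ) (lam : ℕ → ℝ) (lamInf : ℝ)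
    (hpbar_pos : ∀ n, 0 < pbar n)
    (hpbar : Tendsto pbar atTop atTop)
    (hsol : ∀ n, (∀ i, 0 < p n i) ∧ 0 < lam n ∧
      T (p n) = lam n • p n ∧ na (p n) = pbar n)
    (hlam : Tendsto lam atTop (𝓝 lamInf))
    (xInf : Fin N → ℝ)
    (hacc : ∃ φ : ℕ → ℕ, StrictMono φ ∧
      Tendsto (fun n => (na (p (φ n)))⁻¹ • p (φ n)) atTop (𝓝 xInf)) :
    Tinf xInf = lamInf • xInf ∧ na xInf = 1 :=
  stmt12_general T Tinf na hTmono hTscale hTcont hTinf hna_homog hna_cont pbar p lam lamInf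
    hpbar_pos hpbar hsol hlam xInf hacc
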